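/- Let (G,T) be a terminal network with k = cap_G(T), let 𝒯 be a partition of T, and let X be a minimum multiway cut for 𝒯 in G. Let V_1,…,V_s be the vertex sets of the connected components of G−X. Then Σ_{i=1}^s cap_T(V_i) ≤ 3k. -/

import Mathlib

open Finset

variable {V : Type}

/-- Total capacity of a terminal set: sum of degrees. -/
def capacity [Fintype V] (G : SimpleGraph V) [DecidableRel G.Adj] (T : Finset V) : ℕ :=
  ∑ t ∈ T, G.degree t

/-- `P` is a partition of the set `T` into nonempty parts. -/
def IsPartitionOn (T : Set V) (P : Set (Set V)) : Prop :=
  (∀ p ∈ P, p.Nonempty ∧ p ⊆ T) ∧ ∀ t ∈ T, ∃! p, p ∈ P ∧ t ∈ p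

/-- `X` is a multiway cut for the partition `P` in `G`: no component of `G - X`
contains terminals from two distinct parts. -/
def IsMultiwayCut (G : SimpleGraph V) (P : Set (Set V)) (X : Finset (Sym2 V)) : Prop :=
  ↑X ⊆ G.edgeSet ∧ ∀ u v : V, ∀ p ∈ P, ∀ q ∈ P, u ∈ p → v ∈ q →
    (G.deleteEdges ↑X).Reachable u v → p = q

def IsMinMultiwayCut (G : SimpleGraph V) (P : Set (Set V)) (X : Finset (Sym2 V)) : Prop :=
  IsMultiwayCut G P X ∧ ∀ Y : Finset (Sym2 V), IsMultiwayCut G P Y → X.card ≤ Y.card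

/-- `R` is a set of cut requests over `T`: unordered pairs of distinct terminals. -/
def CutRequests (T : Set V) (R : Set (Sym2 V)) : Prop :=
  ∀ r ∈ R, ¬ r.IsDiag ∧ ∀ v ∈ r, v ∈ T

/-- `X` is a multicut for the requests `R` in `G`. -/
def IsMulticut (G : SimpleGraph V) (R : Set (Sym2 V)) (X : Finset (Sym2 V)) : Prop :=
  ↑X ⊆ G.edgeSet ∧ ∀ u v : V, s(u, v) ∈ R → ¬ (G.deleteEdges ↑X).Reachable u v

def IsMinMulticut (G : SimpleGraph V) (R : Set (Sym2 V)) (X : Finset (Sym2 V)) : Prop :=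
  IsMulticut G R X ∧ ∀ Y : Finset (Sym2 V), IsMulticut G R Y → X.card ≤ Y.card

/-- An edge is essential for `(G,T)` if for some set of cut requests over `T`,
every minimum multicut contains it. -/
def Essential (G : SimpleGraph V) (T : Set V) (e : Sym2 V) : Prop :=
  ∃ R : Set (Sym2 V), CutRequests T R ∧ ∀ X : Finset (Sym2 V), IsMinMulticut G R X → e ∈ X

/-- The edge boundary of `S`: edges with exactly one endpoint in `S`. -/
def edgeBoundary [Fintype V] [DecidableEq V] (G : SimpleGraph V) [DecidableRel G.Adj]
    (S : Finset V) : Finset (Sym2 V) :=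
  G.edgeFinset.filter (fun e => ∃ u v : V, e = s(u, v) ∧ u ∈ S ∧ v ∉ S)

/-- `cap_T(S) = cap_G(T ∩ S) + δ_G(S)`. -/
def capT [Fintype V] [DecidableEq V] (G : SimpleGraph V) [DecidableRel G.Adj]
    (T S : Finset V) : ℕ :=
  capacity G (T ∩ S) + (edgeBoundary G S).card

/-- `X` is an `(A,B)`-edge cut in `G`. -/
def IsEdgeCut (G : SimpleGraph V) (A B : Finset V) (X : Finset (Sym2 V)) : Prop :=
  ↑X ⊆ G.edgeSet ∧ ∀ a ∈ A, ∀ b ∈ B, ¬ (G.deleteEdges ↑X).Reachable a b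

def IsMinEdgeCut (G : SimpleGraph V) (A B : Finset V) (X : Finset (Sym2 V)) : Prop :=
  IsEdgeCut G A B X ∧ ∀ Y : Finset (Sym2 V), IsEdgeCut G A B Y → X.card ≤ Y.card


/-- The closed neighborhood `N_G[S]`. -/
def closedNbhd (G : SimpleGraph V) (S : Set V) : Set V :=
  S ∪ {v | ∃ u ∈ S, G.Adj u v}

/-- The (exterior) open neighborhood `N_G(S)`. -/
def extNbhd [Fintype V] [DecidableEq V] (G : SimpleGraph V) [DecidableRel G.Adj]
    (S : Finset V) : Finset V :=
  Finset.univ.filter (fun v => v ∉ S ∧ ∃ u ∈ S, G.Adj u v)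

/-- The graph `G_S`: the edges of `G` with at least one endpoint in `S`
(vertices outside `N_G[S]` are isolated). -/
def recGraph [DecidableEq V] (G : SimpleGraph V) (S : Finset V) : SimpleGraph V where
  Adj u v := G.Adj u v ∧ (u ∈ S ∨ v ∈ S)
  symm := ⟨fun u v h => ⟨h.1.symm, h.2.symm⟩⟩
  loopless := ⟨fun v h => G.loopless.irrefl v h.1⟩

instance [DecidableEq V] (G : SimpleGraph V) [DecidableRel G.Adj] (S : Finset V) :
    DecidableRel (recGraph G S).Adj :=
  fun u v => inferInstanceAs (Decidable (G.Adj u v ∧ (u ∈ S ∨ v ∈ S)))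

/-- The terminal set `T(S) = (T ∩ S) ∪ N_G(S)` of the recursive instance at `S`. -/
def recTerminals [Fintype V] [DecidableEq V] (G : SimpleGraph V) [DecidableRel G.Adj]
    (T S : Finset V) : Finset V :=
  (T ∩ S) ∪ extNbhd G S

/-- An indexed partition `T = T_1 ∪ ... ∪ T_s` of `T` into nonempty disjoint parts. -/
def IsIndexedPartition [DecidableEq V] (T : Finset V) {s : ℕ} (Tp : Fin s → Finset V) : Prop :=
  (∀ i, (Tp i).Nonempty) ∧ (∀ i j, i ≠ j → Disjoint (Tp i) (Tp j)) ∧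
    Finset.univ.biUnion Tp = T

def IsMultiwayCutFam (G : SimpleGraph V) {s : ℕ} (Tp : Fin s → Finset V)
    (X : Finset (Sym2 V)) : Prop :=
  ↑X ⊆ G.edgeSet ∧ ∀ i j : Fin s, i ≠ j → ∀ u ∈ Tp i, ∀ v ∈ Tp j,
    ¬ (G.deleteEdges ↑X).Reachable u v

/-- The set `E(T,V)` of edges incident to at least one terminal. -/
def terminalEdges [Fintype V] [DecidableEq V] (G : SimpleGraph V) [DecidableRel G.Adj]
    (T : Finset V) : Finset (Sym2 V) :=
  G.edgeFinset.filter (fun e => ∃ t ∈ T, t ∈ e)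

/-- Independence of the columns indexed by the finite set `X` in the
linear representation `v`. -/
def FIndep (F : Type) [Field F] {W E : Type} [AddCommGroup W] [Module F W]
    (v : E → W) (X : Finset E) : Prop :=
  LinearIndependent F (fun x : {a // a ∈ X} => v x.1)


/-! Each `δ(V_i)` lies in `X`, and an edge lies in `δ(V_i)` only for the (at most two) components
containing its endpoints, so `Σ δ(V_i) ≤ 2|X|`; since the components partition `V`,
`Σ cap(T ∩ V_i) = k`. Minimality gives `|X| ≤ k`, because deleting all edges at terminals is
already a multiway cut. -/

open Function

lemma Finset.sum_card_le_card_mul {ι α : Type*} [Fintype ι] [DecidableEq α] {A : ι → Finset α}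
    {s : Finset α} {n : ℕ} (hsub : ∀ i, A i ⊆ s) (h : ∀ a ∈ s, #{i | a ∈ A i} ≤ n) :
    ∑ i, #(A i) ≤ #s * n :=
  calc ∑ i, #(A i) = ∑ i, #(s ∩ A i) := by simp_rw [inter_eq_right.2 (hsub _)]
    _ = ∑ a ∈ s, #{i | a ∈ A i} := by
        simp_rw [← filter_mem_eq_inter, card_eq_sum_ones, sum_filter]
        exact sum_comm
    _ ≤ #s * n := by simpa using s.sum_le_card_nsmul _ n h

namespace SimpleGraph

variable [Fintype V] [DecidableEq V] (G : SimpleGraph V) [DecidableRel G.Adj]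

lemma card_terminalEdges_le_capacity (T : Finset V) : #(terminalEdges G T) ≤ capacity G T :=
  calc #(terminalEdges G T) ≤ #(T.biUnion fun t => G.incidenceFinset t) := by
        refine card_le_card fun e he => ?_
        obtain ⟨heE, t, ht, hte⟩ := mem_filter.1 he
        exact mem_biUnion.2 ⟨t, ht, (G.mem_incidenceFinset t e).2 ⟨mem_edgeFinset.1 heE, hte⟩⟩
    _ ≤ ∑ t ∈ T, #(G.incidenceFinset t) := card_biUnion_le
    _ = capacity G T := sum_congr rfl fun t _ => G.card_incidenceFinset_eq_degree t

lemma capacity_eq_sum_capacity_inter (T : Finset V) {ι : Type*} [Fintype ι] {Vc : ι → Finset V}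
    (hdisj : Pairwise (Disjoint on Vc)) (hcover : ∀ v, ∃ i, v ∈ Vc i) :
    capacity G T = ∑ i, capacity G (T ∩ Vc i) := by
  have hT : univ.biUnion (fun i => T ∩ Vc i) = T := by
    ext v
    obtain ⟨i, hi⟩ := hcover v
    simp only [mem_biUnion, mem_univ, mem_inter, true_and]
    exact ⟨fun ⟨_, hv, _⟩ => hv, fun hv => ⟨i, hv, hi⟩⟩
  calc capacity G T = ∑ t ∈ univ.biUnion (fun i => T ∩ Vc i), G.degree t := by rw [hT]; rfl
    _ = ∑ i, capacity G (T ∩ Vc i) :=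
        sum_biUnion fun i _ j _ hij => (hdisj hij).mono inter_subset_right inter_subset_right

variable {G}

lemma eq_of_reachable_deleteEdges_terminalEdges {T : Finset V} {t v : V} (ht : t ∈ T)
    (h : (G.deleteEdges ↑(terminalEdges G T)).Reachable t v) : t = v := by
  obtain ⟨w⟩ := h
  cases w with
  | nil => rfl
  | cons hadj _ =>
    exact absurd (mem_filter.2 ⟨mem_edgeFinset.2 hadj.1, t, ht, Sym2.mem_mk_left _ _⟩)
      ((deleteEdges_adj ..).1 hadj).2

lemma isMultiwayCut_terminalEdges {T : Finset V} {P : Set (Set V)} (hP : IsPartitionOn (↑T) P) :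
    IsMultiwayCut G P (terminalEdges G T) := by
  refine ⟨fun e he => mem_edgeFinset.1 (mem_filter.1 he).1, fun u v p hp q hq hu hv hr => ?_⟩
  have huT : u ∈ T := (hP.1 p hp).2 hu
  obtain rfl := eq_of_reachable_deleteEdges_terminalEdges huT hr
  exact (hP.2 u huT).unique ⟨hp, hu⟩ ⟨hq, hv⟩

lemma IsMinMultiwayCut.card_le_capacity {T : Finset V} {P : Set (Set V)}
    (hP : IsPartitionOn (↑T) P) {X : Finset (Sym2 V)} (hX : IsMinMultiwayCut G P X) :
    #X ≤ capacity G T :=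
  (hX.2 _ (isMultiwayCut_terminalEdges hP)).trans (card_terminalEdges_le_capacity G T)

lemma edgeBoundary_subset_of_adj_mem {S : Finset V} {X : Finset (Sym2 V)}
    (hS : ∀ u v, u ∈ S → (G.deleteEdges ↑X).Adj u v → v ∈ S) : edgeBoundary G S ⊆ X := by
  intro e he
  obtain ⟨heE, u, v, rfl, hu, hv⟩ := mem_filter.1 he
  by_contra heX
  exact hv (hS u v hu ((deleteEdges_adj ..).2 ⟨mem_edgeFinset.1 heE, heX⟩))

lemma card_filter_mem_edgeBoundary_le_two {ι : Type*} [Fintype ι] [DecidableEq ι]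
    {Vc : ι → Finset V} (hdisj : Pairwise (Disjoint on Vc)) (e : Sym2 V) :
    #{i | e ∈ edgeBoundary G (Vc i)} ≤ 2 := by
  induction e using Sym2.ind with
  | _ u v =>
  have hle_one : ∀ w, #(univ.filter fun i => w ∈ Vc i) ≤ 1 := fun w =>
    card_le_one.2 fun i hi j hj => by
      by_contra hij
      exact Finset.disjoint_left.1 (hdisj hij) (mem_filter.1 hi).2 (mem_filter.1 hj).2
  have hsub : (univ.filter fun i => s(u, v) ∈ edgeBoundary G (Vc i)) ⊆
      (univ.filter fun i => u ∈ Vc i) ∪ univ.filter fun i => v ∈ Vc i := by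
    intro i hi
    obtain ⟨-, a, b, hab, ha, -⟩ := mem_filter.1 (mem_filter.1 hi).2
    rcases Sym2.eq_iff.1 hab with ⟨rfl, -⟩ | ⟨-, rfl⟩ <;> simp [ha]
  calc _ ≤ #((univ.filter fun i => u ∈ Vc i) ∪ univ.filter fun i => v ∈ Vc i) :=
        card_le_card hsub
    _ ≤ 1 + 1 := (card_union_le _ _).trans (add_le_add (hle_one u) (hle_one v))

end SimpleGraph

open SimpleGraph

/-- Let `X` be a minimum multiway cut for a partition `𝒯` of `T`,
and let `V_1, …, V_s` enumerate the vertex sets of the connected components of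
`G − X`.  Then `Σ_i cap_T(V_i) ≤ 3k` where `k = cap_G(T)`. -/
theorem sum_component_capacities_le [Fintype V] [DecidableEq V]
    (G : SimpleGraph V) [DecidableRel G.Adj] (T : Finset V)
    (P : Set (Set V)) (hP : IsPartitionOn (↑T) P)
    (X : Finset (Sym2 V)) (hX : IsMinMultiwayCut G P X)
    {s : ℕ} (Vc : Fin s → Finset V)
    (hcomp : ∀ i, ∃ v : V, ∀ u : V, u ∈ Vc i ↔ (G.deleteEdges ↑X).Reachable u v)
    (hcover : ∀ v : V, ∃! i, v ∈ Vc i) :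
    ∑ i, capT G T (Vc i) ≤ 3 * capacity G T := by
  have hdisj : Pairwise (Disjoint on Vc) := fun i j hij =>
    disjoint_left.2 fun v hi hj => hij ((hcover v).unique hi hj)
  have hδX : ∀ i, edgeBoundary G (Vc i) ⊆ X := fun i => by
    obtain ⟨w, hw⟩ := hcomp i
    exact edgeBoundary_subset_of_adj_mem fun u v hu huv =>
      (hw v).2 (huv.symm.reachable.trans ((hw u).1 hu))
  have hδ : ∑ i, #(edgeBoundary G (Vc i)) ≤ #X * 2 :=
    sum_card_le_card_mul hδX fun e _ => card_filter_mem_edgeBoundary_le_two hdisj e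
  have hXk := hX.card_le_capacity hP
  calc ∑ i, capT G T (Vc i)
      = ∑ i, capacity G (T ∩ Vc i) + ∑ i, #(edgeBoundary G (Vc i)) := sum_add_distrib
    _ ≤ capacity G T + #X * 2 := by
        rw [← capacity_eq_sum_capacity_inter G T hdisj fun v => (hcover v).exists]
        exact Nat.add_le_add_left hδ _
    _ ≤ 3 * capacity G T := by omega
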